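/- arXiv:2109.05728 — 2 statements merged into one kernel-verified Lean document; each statement's English description precedes it below -/
import Mathlib

section
/- Let (M,d) be a nonempty ultrametric space, let (A,B) be a proximinal pair of nonempty subsets of M with δ(B) ≤ dist(A,B), let b₀ ∈ B be arbitrary and write r = dist(A,B). Then A₀ = A ∩ B(b₀, r), where B(b₀,r) = {x ∈ M : d(b₀,x) ≤ r} is the closed ball with radius r and center b₀. -/
open Metric

variable {M : Type*} [MetricSpace M]

/-- A subset `A` of a metric space is *spherically complete* (as a subspace) if every nested
decreasing sequence of closed balls of the subspace `A` has nonempty intersection. -/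
def SphericallyCompleteSet (A : Set M) : Prop :=
  ∀ (c : ℕ → M) (r : ℕ → ℝ), (∀ n, c n ∈ A) → (∀ n, 0 ≤ r n) →
    (∀ n, A ∩ closedBall (c (n + 1)) (r (n + 1)) ⊆ A ∩ closedBall (c n) (r n)) →
    (A ∩ ⋂ n, closedBall (c n) (r n)).Nonempty

/-- A metric space is *spherically complete* if every nested decreasing sequence of closed
balls has nonempty intersection. -/
def SphericallyCompleteSpace (M : Type*) [MetricSpace M] : Prop :=
  ∀ (c : ℕ → M) (r : ℕ → ℝ), (∀ n, 0 ≤ r n) →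
    (∀ n, closedBall (c (n + 1)) (r (n + 1)) ⊆ closedBall (c n) (r n)) →
    (⋂ n, closedBall (c n) (r n)).Nonempty

/-- `dist(A, B) = inf {d(a,b) : a ∈ A, b ∈ B}`. -/
noncomputable def setDist (A B : Set M) : ℝ :=
  sInf {t : ℝ | ∃ a ∈ A, ∃ b ∈ B, dist a b = t}

/-- A subset `A` is *proximinal* if every point of `M` has a best approximation in `A`. -/
def IsProximinal (A : Set M) : Prop :=
  ∀ x : M, ∃ a ∈ A, dist x a = infDist x A

/-- `A₀ = {x ∈ A : d(x,y) = dist(A,B) for some y ∈ B}`. -/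
noncomputable def proxA (A B : Set M) : Set M :=
  {x ∈ A | ∃ y ∈ B, dist x y = setDist A B}

/-- `B₀ = {y ∈ B : d(x,y) = dist(A,B) for some x ∈ A}`. -/
noncomputable def proxB (A B : Set M) : Set M :=
  {y ∈ B | ∃ x ∈ A, dist x y = setDist A B}

/-- The closed ball `B(c,r)`, `r > 0`, is a *minimal `F`-invariant ball* if `F(B) ⊆ B`
and `d(y, F(y)) = r` for each `y ∈ B`. -/
def IsMinimalInvariantBall (F : M → M) (c : M) (r : ℝ) : Prop :=
  0 < r ∧ Set.MapsTo F (closedBall c r) (closedBall c r) ∧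
    ∀ y ∈ closedBall c r, dist y (F y) = r

theorem setDist_le_dist {A B : Set M} {a b : M} (ha : a ∈ A) (hb : b ∈ B) :
    setDist A B ≤ dist a b :=
  csInf_le ⟨0, by rintro t ⟨a, -, b, -, rfl⟩; exact dist_nonneg⟩ ⟨a, ha, b, hb, rfl⟩

theorem inter_closedBall_subset_proxA {A B : Set M} {b₀ : M} (hb₀ : b₀ ∈ B) :
    A ∩ closedBall b₀ (setDist A B) ⊆ proxA A B := fun _ ⟨hx, hxb₀⟩ =>
  ⟨hx, b₀, hb₀, (mem_closedBall.1 hxb₀).antisymm (setDist_le_dist hx hb₀)⟩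

/-- In an ultrametric space every point of a closed ball is a centre of it, so a point `x` at
distance `r` from some `y ∈ B ⊆ B(b₀, r)` lies in `B(y, r) = B(b₀, r)`. -/
theorem proxA_subset_inter_closedBall [IsUltrametricDist M] {A B : Set M} {b₀ : M}
    (hB : B ⊆ closedBall b₀ (setDist A B)) :
    proxA A B ⊆ A ∩ closedBall b₀ (setDist A B) := by
  rintro x ⟨hx, y, hy, hxy⟩
  refine ⟨hx, ?_⟩
  rw [IsUltrametricDist.closedBall_eq_of_mem (hB hy)]
  exact mem_closedBall.2 hxy.le

theorem proxA_eq_inter_closedBall_general {M : Type*} [MetricSpace M] [IsUltrametricDist M]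
    (A B : Set M)
    (hδ : ∀ x ∈ B, ∀ y ∈ B, dist x y ≤ setDist A B)
    (b₀ : M) (hb₀ : b₀ ∈ B) :
    proxA A B = A ∩ closedBall b₀ (setDist A B) :=
  (proxA_subset_inter_closedBall fun y hy => mem_closedBall.2 (hδ y hy b₀ hb₀)).antisymm
    (inter_closedBall_subset_proxA hb₀)

/-- Under the assumptions of Lemma 1, for any `b₀ ∈ B` and `r = dist(A,B)` we have
`A₀ = A ∩ B(b₀, r)`, where `B(b₀,r)` is the closed ball of radius `r` centered at `b₀`. -/
theorem proxA_eq_inter_closedBall {M : Type*} [MetricSpace M] [IsUltrametricDist M]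
    [Nonempty M] (A B : Set M) (hA : A.Nonempty) (hB : B.Nonempty)
    (hAprox : IsProximinal A) (hBprox : IsProximinal B)
    (hδ : ∀ x ∈ B, ∀ y ∈ B, dist x y ≤ setDist A B)
    (b₀ : M) (hb₀ : b₀ ∈ B) :
    proxA A B = A ∩ closedBall b₀ (setDist A B) :=
  proxA_eq_inter_closedBall_general A B hδ b₀ hb₀
end

section
/- Let (M,d) be an ultrametric space, let A, B be nonempty spherically complete subsets of M with δ(B) ≤ dist(A,B), and suppose there is a noncyclic strictly contractive mapping F : A ∪ B → A ∪ B. Then F has a unique fixed point p and the equalities B = B₀ = A₀ = {p} hold. -/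
open Metric

variable {M : Type*} [MetricSpace M]

/-!
Both `A` and `B` are spherically complete and `F` is a strict contraction of each, so by the
Priess-Crampe fixed point theorem `F` fixes a point of `A` and a point of `B`; strict
contractivity forces them to coincide. Hence `A ∩ B ≠ ∅`, so `dist(A,B) = 0` and the diameter
bound collapses `B` to that point.

For Priess-Crampe's theorem take, by Zorn's lemma, a minimal ball among the `B(x, d(x, F x))`,
`x ∈ S` (a chain of such balls meets `S` by spherical completeness, and every point of `S` in the
intersection gives a lower bound). If its centre `p` were not fixed, `B(F p, d(F p, F² p))`
would be strictly smaller.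
-/

lemma dist_le_max_of_closedBall_subset_or_superset {c c' : M} {r r' : ℝ} (hr : 0 ≤ r)
    (hr' : 0 ≤ r')
    (h : closedBall c r ⊆ closedBall c' r' ∨ closedBall c' r' ⊆ closedBall c r) :
    dist c c' ≤ max r r' := by
  rcases h with h | h
  · exact (mem_closedBall.1 (h (mem_closedBall_self hr))).trans (le_max_right _ _)
  · exact (mem_closedBall'.1 (h (mem_closedBall_self hr'))).trans (le_max_left _ _)

lemma setDist_eq_zero_of_mem {A B : Set M} {p : M} (hpA : p ∈ A) (hpB : p ∈ B) :
    setDist A B = 0 := by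
  have hnonneg : ∀ t ∈ {t : ℝ | ∃ a ∈ A, ∃ b ∈ B, dist a b = t}, 0 ≤ t := by
    rintro _ ⟨a, -, b, -, rfl⟩
    exact dist_nonneg
  have hzero : (0 : ℝ) ∈ {t : ℝ | ∃ a ∈ A, ∃ b ∈ B, dist a b = t} := ⟨p, hpA, p, hpB, dist_self p⟩
  exact le_antisymm (csInf_le ⟨0, hnonneg⟩ hzero) (le_csInf ⟨0, hzero⟩ hnonneg)

lemma eq_of_apply_eq_self_of_dist_lt {T : Set M} {F : M → M}
    (hF : ∀ x ∈ T, ∀ y ∈ T, x ≠ y → dist (F x) (F y) < dist x y) {p q : M} (hp : p ∈ T)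
    (hq : q ∈ T) (hFp : F p = p) (hFq : F q = q) : p = q := by
  by_contra hpq
  have h := hF p hp q hq hpq
  rw [hFp, hFq] at h
  exact lt_irrefl _ h

section Ultrametric

variable [IsUltrametricDist M]

lemma IsUltrametricDist.closedBall_subset_closedBall_of_dist_le {x y : M} {r s : ℝ}
    (hyx : dist y x ≤ r) (hsr : s ≤ r) : closedBall y s ⊆ closedBall x r :=
  (closedBall_subset_closedBall hsr).trans (closedBall_eq_of_mem hyx).symm.subset

lemma closedBall_dist_apply_subset {F : M → M} {x y : M} (hF : dist (F x) (F y) ≤ dist x y)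
    (hyx : dist y x ≤ dist x (F x)) :
    closedBall y (dist y (F y)) ⊆ closedBall x (dist x (F x)) := by
  refine IsUltrametricDist.closedBall_subset_closedBall_of_dist_le hyx ?_
  calc dist y (F y) ≤ max (dist y x) (max (dist x (F x)) (dist (F x) (F y))) :=
        (dist_triangle_max y x (F y)).trans (max_le_max le_rfl (dist_triangle_max x (F x) (F y)))
    _ ≤ dist x (F x) := max_le hyx (max_le le_rfl (hF.trans (dist_comm x y ▸ hyx)))

/-- Approach the infimum `ρ` of the radii by the balls `B(c iₙ, ρ + 1/(n+1))` with `r iₙ` close to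
`ρ`; they are nested because the balls of the chain are pairwise comparable. -/
theorem SphericallyCompleteSet.exists_forall_dist_le_of_chain {S : Set M}
    (hS : SphericallyCompleteSet S) {ι : Type*} [Nonempty ι] (c : ι → M) (r : ι → ℝ)
    (hc : ∀ i, c i ∈ S) (hr : ∀ i, 0 ≤ r i)
    (hchain : ∀ i j, closedBall (c i) (r i) ⊆ closedBall (c j) (r j) ∨
      closedBall (c j) (r j) ⊆ closedBall (c i) (r i)) :
    ∃ z ∈ S, ∀ i, dist z (c i) ≤ r i := by
  set ρ := ⨅ i, r i
  have hρ : ∀ i, ρ ≤ r i := ciInf_le ⟨0, Set.forall_mem_range.2 hr⟩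
  have hρnonneg : 0 ≤ ρ := le_ciInf hr
  have happrox : ∀ n : ℕ, ∃ i, r i < ρ + 1 / (n + 1) := fun n =>
    exists_lt_of_ciInf_lt (lt_add_of_pos_right ρ Nat.one_div_pos_of_nat)
  choose i hi using happrox
  have hcentres : ∀ n j, dist (c (i n)) (c j) ≤ max (r (i n)) (r j) := fun n j =>
    dist_le_max_of_closedBall_subset_or_superset (hr _) (hr _) (hchain _ _)
  have hnested : ∀ n, S ∩ closedBall (c (i (n + 1))) (ρ + 1 / ((n + 1 : ℕ) + 1)) ⊆
      S ∩ closedBall (c (i n)) (ρ + 1 / (n + 1)) := by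
    intro n
    have hmono : ρ + 1 / ((n + 1 : ℕ) + 1 : ℝ) ≤ ρ + 1 / (n + 1) :=
      add_le_add le_rfl (Nat.one_div_le_one_div n.le_succ)
    refine Set.inter_subset_inter_right S
      (IsUltrametricDist.closedBall_subset_closedBall_of_dist_le ?_ hmono)
    exact (hcentres (n + 1) (i n)).trans (max_le ((hi _).le.trans hmono) (hi n).le)
  obtain ⟨z, hzS, hz⟩ := hS (fun n => c (i n)) (fun n => ρ + 1 / (n + 1)) (fun n => hc _)
    (fun n => add_nonneg hρnonneg Nat.one_div_pos_of_nat.le) hnested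
  rw [Set.mem_iInter] at hz
  refine ⟨z, hzS, fun j => le_of_forall_pos_lt_add fun ε hε => ?_⟩
  obtain ⟨n, hn⟩ := exists_nat_one_div_lt hε
  calc dist z (c j) ≤ max (dist z (c (i n))) (dist (c (i n)) (c j)) := dist_triangle_max _ _ _
    _ ≤ max (ρ + 1 / (n + 1)) (max (r (i n)) (r j)) := max_le_max (hz n) (hcentres n j)
    _ ≤ r j + 1 / (n + 1) := by
        have hpos : (0 : ℝ) < 1 / (n + 1) := Nat.one_div_pos_of_nat
        exact max_le (by linarith [hρ j]) (max_le (by linarith [hρ j, hi n]) (by linarith))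
    _ < r j + ε := by linarith

/-- The Priess-Crampe fixed point theorem. -/
theorem SphericallyCompleteSet.exists_fixedPoint {S : Set M} (hS : SphericallyCompleteSet S)
    (hne : S.Nonempty) {F : M → M} (hFS : Set.MapsTo F S S)
    (hF : ∀ x ∈ S, ∀ y ∈ S, x ≠ y → dist (F x) (F y) < dist x y) :
    ∃ p ∈ S, F p = p := by
  have hF' : ∀ x ∈ S, ∀ y ∈ S, dist (F x) (F y) ≤ dist x y := by
    intro x hx y hy
    rcases eq_or_ne x y with rfl | hxy
    · simp only [dist_self, le_refl]
    · exact (hF x hx y hy hxy).le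
  let dispBall : M → Set M := fun x => closedBall x (dist x (F x))
  have hchain : ∀ c ⊆ dispBall '' S, IsChain (· ⊆ ·) c → c.Nonempty →
      ∃ lb ∈ dispBall '' S, ∀ s ∈ c, lb ⊆ s := by
    rintro c hcS hc ⟨_, hs⟩
    obtain ⟨x₀, hx₀, rfl⟩ := hcS hs
    have : Nonempty {x // x ∈ S ∧ dispBall x ∈ c} := ⟨⟨x₀, hx₀, hs⟩⟩
    obtain ⟨z, hzS, hz⟩ := hS.exists_forall_dist_le_of_chain
      (fun x : {x // x ∈ S ∧ dispBall x ∈ c} => x.1) (fun x => dist x.1 (F x.1))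
      (fun x => x.2.1) (fun _ => dist_nonneg) (fun x y => hc.total x.2.2 y.2.2)
    refine ⟨dispBall z, Set.mem_image_of_mem _ hzS, fun s hs => ?_⟩
    obtain ⟨x, hxS, rfl⟩ := hcS hs
    exact closedBall_dist_apply_subset (hF' x hxS z hzS) (hz ⟨x, hxS, hs⟩)
  obtain ⟨a, ha⟩ := hne
  obtain ⟨_, -, hmin⟩ := zorn_superset_nonempty _ hchain _ (Set.mem_image_of_mem dispBall ha)
  obtain ⟨p, hpS, rfl⟩ := hmin.prop
  refine ⟨p, hpS, by_contra fun hFp => ?_⟩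
  have hsub : dispBall (F p) ⊆ dispBall p :=
    closedBall_dist_apply_subset (hF' p hpS (F p) (hFS hpS)) (dist_comm (F p) p).le
  have hp : p ∈ dispBall (F p) :=
    hmin.2 (Set.mem_image_of_mem _ (hFS hpS)) hsub (mem_closedBall_self dist_nonneg)
  exact ((mem_closedBall.1 hp).trans_lt (hF p hpS (F p) (hFS hpS) (Ne.symm hFp))).false

end Ultrametric

/-- **Theorem 2.11.** Let `A, B` be nonempty spherically complete subsets of an ultrametric
space with `δ(B) ≤ dist(A,B)`. If `F : A ∪ B → A ∪ B` is noncyclic and strictly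
contractive, then `F` has a unique fixed point `p` (in `A ∪ B`) and
`B = B₀ = A₀ = {p}`. -/
theorem strictlyContractive_noncyclic_unique_fixedPoint {M : Type*} [MetricSpace M]
    [IsUltrametricDist M] (A B : Set M) (hA : A.Nonempty) (hB : B.Nonempty)
    (hAsc : SphericallyCompleteSet A) (hBsc : SphericallyCompleteSet B)
    (hδ : ∀ x ∈ B, ∀ y ∈ B, dist x y ≤ setDist A B)
    (F : M → M) (hFA : Set.MapsTo F A A) (hFB : Set.MapsTo F B B)
    (hF : ∀ x ∈ A ∪ B, ∀ y ∈ A ∪ B, x ≠ y → dist (F x) (F y) < dist x y) :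
    ∃ p ∈ A ∪ B, F p = p ∧ (∀ q ∈ A ∪ B, F q = q → q = p) ∧
      B = {p} ∧ proxB A B = {p} ∧ proxA A B = {p} := by
  obtain ⟨p, hpA, hFp⟩ := hAsc.exists_fixedPoint hA hFA
    fun x hx y hy => hF x (.inl hx) y (.inl hy)
  obtain ⟨q, hqB, hFq⟩ := hBsc.exists_fixedPoint hB hFB
    fun x hx y hy => hF x (.inr hx) y (.inr hy)
  obtain rfl : p = q := eq_of_apply_eq_self_of_dist_lt hF (.inl hpA) (.inr hqB) hFp hFq
  have hd : setDist A B = 0 := setDist_eq_zero_of_mem hpA hqB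
  have hBp : B = {p} := Set.eq_singleton_iff_unique_mem.2
    ⟨hqB, fun b hb => dist_le_zero.1 (hd ▸ hδ b hb p hqB)⟩
  have hdp : dist p p = setDist A B := by rw [dist_self, hd]
  refine ⟨p, .inl hpA, hFp,
    fun q hq hFq => eq_of_apply_eq_self_of_dist_lt hF hq (.inl hpA) hFq hFp, hBp, ?_, ?_⟩
  · exact Set.eq_singleton_iff_unique_mem.2
      ⟨⟨hqB, p, hpA, hdp⟩, fun y hy => Set.eq_of_mem_singleton (hBp ▸ hy.1)⟩
  · refine Set.eq_singleton_iff_unique_mem.2 ⟨⟨hpA, p, hqB, hdp⟩, ?_⟩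
    rintro x ⟨-, y, hyB, hxy⟩
    exact (dist_eq_zero.1 (hxy.trans hd)).trans (Set.eq_of_mem_singleton (hBp ▸ hyB))
end
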